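/- Let P, Q be nonzero coprime polynomials over F_q with m = deg P > n = deg Q. Let v ∈ F_q[X] and let β ∈ F_q((X^{-1})) with deg β < m. Then there exists a unique digit s ∈ L(v) = {s : deg s < m, s ≡ −P·v mod Q} such that deg(β − s) < n. -/

import Mathlib

/-! The digit is forced: matching `β` below degree `n = deg Q` prescribes the coefficients of `s`
in degrees `≥ n`, and the congruence modulo `Q` then pins down the remaining part of degree `< n`,
which is a remainder modulo `Q`. Two digits differ by a multiple of `Q` of degree `< deg Q`, hence
coincide; and since `deg β < m`, the prescribed coefficients vanish from degree `m` on. -/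

open Polynomial

/-- Embedding of `F_q[X]` into the field `F_q((X⁻¹))`, modelled as Laurent series
(`HahnSeries ℤ Fq`) in the variable `t = X⁻¹`: the monomial `X^i` is sent to `t^{-i}`,
i.e. to `HahnSeries.single (-i) 1`. -/
noncomputable def polyToLS {Fq : Type*} [Field Fq] (p : Polynomial Fq) :
    LaurentSeries Fq :=
  ∑ i ∈ p.support, HahnSeries.single (-(i : ℤ)) (p.coeff i)

section

variable {K : Type*} [Field K]

theorem polyToLS_coeff_neg_natCast (p : K[X]) (j : ℕ) :
    (polyToLS p).coeff (-(j : ℤ)) = p.coeff j := by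
  rw [polyToLS, HahnSeries.coeff_sum, Finset.sum_eq_single j]
  · simp
  · intro i _ hij
    simp [hij.symm]
  · intro hj
    simp [notMem_support_iff.mp hj]

theorem coeff_sub_polyToLS_eq_zero_iff (β : LaurentSeries K) (s : K[X]) (n : ℕ) :
    (∀ e : ℤ, e ≤ -(n : ℤ) → (β - polyToLS s).coeff e = 0) ↔
      ∀ k : ℕ, n ≤ k → s.coeff k = β.coeff (-k) := by
  constructor
  · intro h k hk
    have := h (-k) (by omega)
    rwa [HahnSeries.coeff_sub, polyToLS_coeff_neg_natCast, sub_eq_zero, eq_comm] at this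
  · intro h e he
    obtain ⟨k, rfl⟩ : ∃ k : ℕ, e = -(k : ℤ) := ⟨(-e).toNat, by omega⟩
    rw [HahnSeries.coeff_sub, polyToLS_coeff_neg_natCast, h k (by omega), sub_self]

theorem exists_polynomial_coeff_eq_coeff_neg {β : LaurentSeries K} {m : ℕ}
    (hβ : ∀ e : ℤ, e ≤ -(m : ℤ) → β.coeff e = 0) :
    ∃ h : K[X], ∀ k : ℕ, h.coeff k = β.coeff (-k) := by
  refine ⟨∑ j ∈ Finset.range m, monomial j (β.coeff (-j)), fun k => ?_⟩
  simp only [finsetSum_coeff, coeff_monomial, Finset.sum_ite_eq', Finset.mem_range]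
  split_ifs with hk
  · rfl
  · exact (hβ _ (by omega)).symm

theorem exists_dvd_add_of_coeff_eq {Q : K[X]} (hQ : Q ≠ 0) (a h : K[X]) :
    ∃ s : K[X], Q ∣ a + s ∧ ∀ k, Q.natDegree ≤ k → s.coeff k = h.coeff k := by
  refine ⟨h - (a + h) % Q, ⟨(a + h) / Q, ?_⟩, fun k hk => ?_⟩
  · rw [← add_sub_assoc, EuclideanDomain.mod_eq_sub_mul_div, sub_sub_cancel]
  · have hmod : ((a + h) % Q).degree < k :=
      (degree_mod_lt _ hQ).trans_le ((degree_le_natDegree).trans (by exact_mod_cast hk))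
    rw [coeff_sub, coeff_eq_zero_of_degree_lt hmod, sub_zero]

end

theorem eq_of_dvd_add_of_coeff_eq {R : Type*} [CommRing R] [NoZeroDivisors R]
    {Q a s s' : R[X]} (hs : Q ∣ a + s) (hs' : Q ∣ a + s')
    (hcoeff : ∀ k, Q.natDegree ≤ k → s.coeff k = s'.coeff k) : s = s' := by
  by_contra hne
  have hdvd : Q ∣ s - s' := by simpa using dvd_sub hs hs'
  have hQ : Q.natDegree ≤ (s - s').natDegree := natDegree_le_of_dvd hdvd (sub_ne_zero.mpr hne)
  exact (leadingCoeff_ne_zero.mpr (sub_ne_zero.mpr hne)) (by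
    rw [leadingCoeff, coeff_sub, hcoeff _ hQ, sub_self])

theorem pq_unique_digit_for_prefix (Fq : Type*) [Field Fq]
    (P Q : Polynomial Fq) (hQ : Q ≠ 0)
    (hdeg : Q.degree < P.degree) (v : Polynomial Fq)
    (β : LaurentSeries Fq) (hβ : ∀ e : ℤ, e ≤ -(P.natDegree : ℤ) → β.coeff e = 0) :
    ∃! s : Polynomial Fq,
      (s.degree < P.degree ∧ Q ∣ P * v + s) ∧
        ∀ e : ℤ, e ≤ -(Q.natDegree : ℤ) → (β - polyToLS s).coeff e = 0 := by
  simp_rw [coeff_sub_polyToLS_eq_zero_iff]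
  obtain ⟨h, hh⟩ := exists_polynomial_coeff_eq_coeff_neg hβ
  obtain ⟨s, hdvd, hs⟩ := exists_dvd_add_of_coeff_eq hQ (P * v) h
  have hcoeff : ∀ k, Q.natDegree ≤ k → s.coeff k = β.coeff (-k) := fun k hk =>
    (hs k hk).trans (hh k)
  have hQP : Q.natDegree < P.natDegree := natDegree_lt_natDegree hQ hdeg
  have hsdeg : s.degree < P.degree := by
    rw [degree_eq_natDegree (ne_zero_of_degree_gt hdeg), degree_lt_iff_coeff_zero]
    intro k hk
    rw [hcoeff k (by omega), hβ _ (by omega)]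
  refine ⟨s, ⟨⟨hsdeg, hdvd⟩, hcoeff⟩, fun s' ⟨⟨_, hdvd'⟩, hcoeff'⟩ => ?_⟩
  exact eq_of_dvd_add_of_coeff_eq hdvd' hdvd fun k hk => (hcoeff' k hk).trans (hcoeff k hk).symm
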